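/- arXiv:2103.16841 — 3 statements merged into one kernel-verified Lean document; each statement's English description precedes it below -/
import Mathlib

section
/- Let x̂ = (t, x) and ŷ = (τ, y) be points of space-time ℝ × ℝ³ (times t, τ ∈ ℝ, spatial parts x, y ∈ ℝ³), let r > 0, and let B_r(ŷ) be the closed Euclidean ball of radius r around ŷ in ℝ⁴ ≅ ℝ × ℝ³. Then the maximum of φ_Ξ(x̂ − ẑ) over ẑ ∈ B_r(ŷ) exists and equals φ_Ξ(x̂ − ŷ) + r√2; that is, φ_Ξ(x̂ − ŷ) + r√2 is the greatest element of the set {φ_Ξ(x̂ − ẑ) : ẑ ∈ B_r(ŷ)}. -/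
/-- The light cone level function `φ_Ξ(t, x) = ‖x‖ − t` on space-time `ℝ × ℝ³`. -/
noncomputable def phiXi (t : ℝ) (x : EuclideanSpace ℝ (Fin 3)) : ℝ := ‖x‖ - t

/-!
Moving the centre `(τ, y)` by `(δ, w)` changes `φ_Ξ(x̂ − ·)` by at most `δ + ‖w‖`
(triangle inequality), and `δ + ‖w‖ ≤ √2 · √(δ² + ‖w‖²) ≤ r√2` by Cauchy–Schwarz in `ℝ²`.
Equality holds for `δ = ‖w‖ = r/√2` with `w` pointing from `x` towards `y`.
-/

lemma add_le_sqrt_two_mul_sqrt_sq_add_sq (a b : ℝ) : a + b ≤ √2 * √(a ^ 2 + b ^ 2) := by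
  rw [← Real.sqrt_mul zero_le_two]
  apply Real.le_sqrt_of_sq_le
  nlinarith [sq_nonneg (a - b)]

lemma sqrt_sq_add_sq_div_sqrt_two {r : ℝ} (hr : 0 ≤ r) :
    √((r / √2) ^ 2 + (r / √2) ^ 2) = r := by
  rw [div_pow, Real.sq_sqrt zero_le_two, add_halves, Real.sqrt_sq hr]

section Normed

variable {E : Type*} [NormedAddCommGroup E] [NormedSpace ℝ E] [Nontrivial E]

lemma exists_norm_eq_one_and_eq_norm_smul (v : E) : ∃ u : E, ‖u‖ = 1 ∧ v = ‖v‖ • u := by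
  by_cases hv : v = 0
  · obtain ⟨u, hu⟩ := exists_norm_eq E zero_le_one
    exact ⟨u, hu, by simp [hv]⟩
  · have hv' : ‖v‖ ≠ 0 := norm_ne_zero_iff.mpr hv
    refine ⟨‖v‖⁻¹ • v, ?_, ?_⟩
    · rw [norm_smul, norm_inv, norm_norm, inv_mul_cancel₀ hv']
    · rw [smul_smul, mul_inv_cancel₀ hv', one_smul]

lemma exists_norm_sub_eq_add_norm_sub (x y : E) {c : ℝ} (hc : 0 ≤ c) :
    ∃ z : E, ‖z - y‖ = c ∧ ‖x - z‖ = ‖x - y‖ + c := by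
  obtain ⟨u, hu, hxy⟩ := exists_norm_eq_one_and_eq_norm_smul (x - y)
  refine ⟨y - c • u, ?_, ?_⟩
  · rw [sub_sub_cancel_left, norm_neg, norm_smul, hu, mul_one, Real.norm_of_nonneg hc]
  · have hxz : x - (y - c • u) = (‖x - y‖ + c) • u := by
      rw [add_smul, ← hxy]
      abel
    rw [hxz, norm_smul, hu, mul_one, Real.norm_of_nonneg (by positivity)]

end Normed

/-- The maximum of `φ_Ξ(x̂ − ẑ)` over the closed Euclidean ball of radius `r` around
`ŷ = (τ, y)` in `ℝ⁴ ≅ ℝ × ℝ³` exists and equals `φ_Ξ(x̂ − ŷ) + r√2`. -/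
theorem max_phiXi_on_closedBall (t τ : ℝ) (x y : EuclideanSpace ℝ (Fin 3))
    (r : ℝ) (hr : 0 < r) :
    IsGreatest
      {v : ℝ | ∃ (s : ℝ) (z : EuclideanSpace ℝ (Fin 3)),
        Real.sqrt ((s - τ) ^ 2 + ‖z - y‖ ^ 2) ≤ r ∧ v = phiXi (t - s) (x - z)}
      (phiXi (t - τ) (x - y) + r * Real.sqrt 2) := by
  constructor
  · have hc : 0 ≤ r / √2 := by positivity
    obtain ⟨z, hzy, hxz⟩ := exists_norm_sub_eq_add_norm_sub x y hc
    refine ⟨τ + r / √2, z, ?_, ?_⟩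
    · rw [add_sub_cancel_left, hzy, sqrt_sq_add_sq_div_sqrt_two hr.le]
    · have h2 : r / √2 + r / √2 = r * √2 := by
        field_simp
        norm_num
      simp only [phiXi, hxz]
      linarith
  · rintro v ⟨s, z, hsz, rfl⟩
    have htri : ‖x - z‖ ≤ ‖x - y‖ + ‖z - y‖ := by
      simpa only [norm_sub_rev z y] using norm_sub_le_norm_sub_add_norm_sub x y z
    have hshift : (s - τ) + ‖z - y‖ ≤ r * √2 :=
      calc (s - τ) + ‖z - y‖ ≤ √2 * √((s - τ) ^ 2 + ‖z - y‖ ^ 2) :=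
            add_le_sqrt_two_mul_sqrt_sq_add_sq _ _
        _ ≤ √2 * r := by gcongr
        _ = r * √2 := mul_comm _ _
    simp only [phiXi]
    linarith
end

section
/- Let x̂ = (t, x) and ŷ = (τ, y) be points of space-time ℝ × ℝ³, let r > 0, and let B_r(ŷ) be the closed Euclidean ball of radius r around ŷ in ℝ⁴ ≅ ℝ × ℝ³. Define d_r : [0, ∞) → ℝ by d_r(α) = α + √(r² − α²) if 0 ≤ α < r/√2 and d_r(α) = r√2 if α ≥ r/√2. Then the minimum of φ_Ξ(x̂ − ẑ) over ẑ ∈ B_r(ŷ) exists and equals φ_Ξ(x̂ − ŷ) − d_r(‖x − y‖); that is, φ_Ξ(x̂ − ŷ) − d_r(‖x − y‖) is the least element of the set {φ_Ξ(x̂ − ẑ) : ẑ ∈ B_r(ŷ)}. -/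
/-- The function `d_r : [0, ∞) → ℝ`, `d_r(α) = α + √(r² − α²)` for `0 ≤ α < r/√2`
and `d_r(α) = r√2` for `α ≥ r/√2`. -/
noncomputable def dRad (r α : ℝ) : ℝ :=
  if α < r / Real.sqrt 2 then α + Real.sqrt (r ^ 2 - α ^ 2) else r * Real.sqrt 2

/-!
Write `ẑ = (s, z)`, `α = ‖x - y‖` and `β = ‖z - y‖`. The ball constraint gives
`τ - s ≤ √(r² - β²)` and the triangle inequality gives `α - ‖x - z‖ ≤ min α β`, so
`φ_Ξ(x̂ - ŷ) - φ_Ξ(x̂ - ẑ) ≤ min α β + √(r² - β²)`. For `β ∈ [0, r]` the right-hand side is at most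
`d_r(α)`, with equality at `β = min α (r / √2)`; this bound is attained by the point `z` of the
segment `[y, x]` at distance `β` from `y`, together with `s = τ - √(r² - β²)`.
-/

open Real

theorem exists_dist_eq_and_dist_eq_sub {E : Type*} [NormedAddCommGroup E] [NormedSpace ℝ E]
    {x y : E} {β : ℝ} (hβ : 0 ≤ β) (hβxy : β ≤ dist x y) :
    ∃ z, dist z y = β ∧ dist x z = dist x y - β := by
  rw [dist_comm] at hβxy
  rcases hβ.eq_or_lt with rfl | hβpos
  · exact ⟨y, dist_self y, by rw [sub_zero]⟩
  have hd : 0 < dist y x := hβpos.trans_le hβxy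
  have hc : 0 ≤ β / dist y x := by positivity
  have hc1 : β / dist y x ≤ 1 := (div_le_one hd).2 hβxy
  refine ⟨AffineMap.lineMap y x (β / dist y x), ?_, ?_⟩
  · rw [dist_lineMap_left, Real.norm_of_nonneg hc, div_mul_cancel₀ _ hd.ne']
  · rw [dist_comm, dist_comm x, dist_lineMap_right, Real.norm_of_nonneg (sub_nonneg.2 hc1),
      sub_mul, one_mul, div_mul_cancel₀ _ hd.ne']

theorem abs_le_sqrt_sq_sub_sq_of_sqrt_le {a b r : ℝ} (h : √(a ^ 2 + b ^ 2) ≤ r) :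
    |a| ≤ √(r ^ 2 - b ^ 2) :=
  abs_le_sqrt (by nlinarith [(sqrt_le_iff.1 h).2])

theorem add_sqrt_sq_sub_sq_le_mul_sqrt_two {β r : ℝ} (hr : 0 ≤ r) (hβ : β ^ 2 ≤ r ^ 2) :
    β + √(r ^ 2 - β ^ 2) ≤ r * √2 := by
  have hw := sq_sqrt (sub_nonneg.2 hβ)
  have h2 := sq_sqrt (zero_le_two : (0 : ℝ) ≤ 2)
  nlinarith [sq_nonneg (β - √(r ^ 2 - β ^ 2)), mul_nonneg hr (sqrt_nonneg 2)]

theorem add_sqrt_sq_sub_sq_le_of_le {α β r : ℝ} (hβ : 0 ≤ β) (hβα : β ≤ α)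
    (hαr : 2 * α ^ 2 ≤ r ^ 2) :
    β + √(r ^ 2 - β ^ 2) ≤ α + √(r ^ 2 - α ^ 2) := by
  set u := √(r ^ 2 - α ^ 2)
  set w := √(r ^ 2 - β ^ 2)
  have hu : u ^ 2 = r ^ 2 - α ^ 2 := sq_sqrt (by nlinarith)
  have hw : w ^ 2 = r ^ 2 - β ^ 2 := sq_sqrt (by nlinarith)
  have hαu : α ≤ u := le_sqrt_of_sq_le (by nlinarith)
  have huw : u ≤ w := sqrt_le_sqrt (by nlinarith)
  -- `(w - u) (w + u) = (α - β) (α + β)` and `w + u ≥ α + β`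
  nlinarith [mul_le_mul_of_nonneg_left (add_le_add (hβα.trans hαu) (hαu.trans huw)) (sub_nonneg.2 huw)]

theorem min_add_sqrt_sq_sub_sq_le_dRad {α β r : ℝ} (hα : 0 ≤ α) (hβ : 0 ≤ β) (hβr : β ≤ r) :
    min α β + √(r ^ 2 - β ^ 2) ≤ dRad r α := by
  have hβr2 : β ^ 2 ≤ r ^ 2 := pow_le_pow_left₀ hβ hβr 2
  unfold dRad
  split_ifs with h
  · have hαr : 2 * α ^ 2 ≤ r ^ 2 := by
      have h' := pow_le_pow_left₀ (by positivity) ((lt_div_iff₀ (sqrt_pos.2 zero_lt_two)).1 h).le 2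
      rwa [mul_pow, sq_sqrt zero_le_two, mul_comm] at h'
    rcases le_total α β with hαβ | hβα
    · rw [min_eq_left hαβ]
      gcongr
    · rw [min_eq_right hβα]
      exact add_sqrt_sq_sub_sq_le_of_le hβ hβα hαr
  · calc min α β + √(r ^ 2 - β ^ 2) ≤ β + √(r ^ 2 - β ^ 2) := by gcongr; exact min_le_right _ _
      _ ≤ r * √2 := add_sqrt_sq_sub_sq_le_mul_sqrt_two (hβ.trans hβr) hβr2

theorem dRad_eq_of_nonneg {α r : ℝ} (hr : 0 ≤ r) :
    dRad r α = min α (r / √2) + √(r ^ 2 - min α (r / √2) ^ 2) := by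
  unfold dRad
  split_ifs with h
  · rw [min_eq_left h.le]
  · have h2 : √2 ^ 2 = 2 := sq_sqrt zero_le_two
    have hhalf : r ^ 2 - (r / √2) ^ 2 = (r / √2) ^ 2 := by rw [div_pow, h2]; ring
    rw [min_eq_right (not_lt.1 h), hhalf, sqrt_sq (by positivity)]
    field_simp
    rw [h2]
    ring

/-- The minimum of `φ_Ξ(x̂ − ẑ)` over the closed Euclidean ball of radius `r` around
`ŷ = (τ, y)` in `ℝ⁴ ≅ ℝ × ℝ³` exists and equals `φ_Ξ(x̂ − ŷ) − d_r(‖x − y‖)`. -/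
theorem min_phiXi_on_closedBall (t τ : ℝ) (x y : EuclideanSpace ℝ (Fin 3))
    (r : ℝ) (hr : 0 < r) :
    IsLeast
      {v : ℝ | ∃ (s : ℝ) (z : EuclideanSpace ℝ (Fin 3)),
        Real.sqrt ((s - τ) ^ 2 + ‖z - y‖ ^ 2) ≤ r ∧ v = phiXi (t - s) (x - z)}
      (phiXi (t - τ) (x - y) - dRad r ‖x - y‖) := by
  constructor
  · rw [dRad_eq_of_nonneg hr.le]
    set β := min ‖x - y‖ (r / √2)
    have hβ : 0 ≤ β := le_min (norm_nonneg _) (by positivity)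
    have hβr : β ≤ r := (min_le_right _ _).trans (div_le_self hr.le (one_le_sqrt.2 one_le_two))
    obtain ⟨z, hzy, hzx⟩ := exists_dist_eq_and_dist_eq_sub (x := x) hβ
      (by rw [dist_eq_norm]; exact min_le_left _ _)
    simp only [dist_eq_norm] at hzy hzx
    refine ⟨τ - √(r ^ 2 - β ^ 2), z, ?_, ?_⟩
    · rw [hzy, sub_sub_cancel_left, neg_sq, sq_sqrt (by nlinarith), sub_add_cancel,
        sqrt_sq hr.le]
    · rw [phiXi, phiXi, hzx]
      ring
  · rintro v ⟨s, z, hsz, rfl⟩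
    have hτs : -(s - τ) ≤ √(r ^ 2 - ‖z - y‖ ^ 2) :=
      (neg_le_abs _).trans (abs_le_sqrt_sq_sub_sq_of_sqrt_le hsz)
    have hzyr : ‖z - y‖ ≤ r :=
      (le_sqrt_of_sq_le (le_add_of_nonneg_left (sq_nonneg (s - τ)))).trans hsz
    have hdist : ‖x - y‖ - ‖x - z‖ ≤ min ‖x - y‖ ‖z - y‖ :=
      le_min (sub_le_self _ (norm_nonneg _))
        (by simpa using norm_sub_norm_le (x - y) (x - z))
    have hmax := min_add_sqrt_sq_sub_sq_le_dRad (norm_nonneg (x - y)) (norm_nonneg (z - y)) hzyr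
    simp only [phiXi]
    linarith
end

section
/- Let r > 0 and let α be a real number with 0 ≤ α < r/√2, and define f_r : [0, r] → ℝ by f_r(β) = |α − β| − √(r² − β²). Then the minimum of f_r over [0, r] exists, is attained at β = α, and equals −√(r² − α²); that is, −√(r² − α²) is the least element of the set {f_r(β) : β ∈ [0, r]}. -/
/-!
For `β ≤ α` the inequality `f_r(β) ≥ f_r(α)` says that `x ↦ x + √(r² − x²)` is monotone on
`[0, α]`; since `√(r² − β²)² − √(r² − α²)² = (α − β)(α + β)`, this reduces to
`α + β ≤ √(r² − α²) + √(r² − β²)`, which holds because `2α² ≤ r²` puts every `x ≤ α` below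
`√(r² − x²)`. For `β ≥ α` both terms of `f_r` are at least their value at `α`.
-/

open Real

lemma two_mul_sq_lt_sq_of_lt_div_sqrt_two {r α : ℝ} (hα0 : 0 ≤ α) (hα : α < r / √2) :
    2 * α ^ 2 < r ^ 2 := by
  have hsqrt2 : 0 < √2 := by positivity
  have hαr : α * √2 < r := (lt_div_iff₀ hsqrt2).1 hα
  calc 2 * α ^ 2 = (α * √2) ^ 2 := by rw [mul_pow, sq_sqrt zero_le_two, mul_comm]
    _ < r ^ 2 := pow_lt_pow_left₀ hαr (by positivity) two_ne_zero

lemma add_sqrt_sq_sub_sq_le {r α β : ℝ} (hβ0 : 0 ≤ β) (hβα : β ≤ α) (hα : 2 * α ^ 2 ≤ r ^ 2) :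
    β + √(r ^ 2 - β ^ 2) ≤ α + √(r ^ 2 - α ^ 2) := by
  set a := √(r ^ 2 - α ^ 2)
  set b := √(r ^ 2 - β ^ 2)
  have ha : a ^ 2 = r ^ 2 - α ^ 2 := sq_sqrt (by nlinarith)
  have hb : b ^ 2 = r ^ 2 - β ^ 2 := sq_sqrt (by nlinarith)
  have hαa : α ≤ a := le_sqrt_of_sq_le (by linarith)
  have hab : a ≤ b := sqrt_le_sqrt (by nlinarith)
  have hsq : (b - a) * (b + a) = (α - β) * (α + β) := by linear_combination hb - ha
  nlinarith [mul_le_mul_of_nonneg_left (add_le_add hαa (hαa.trans hab) : α + α ≤ a + b)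
    (sub_nonneg.2 hβα)]

theorem min_fr_of_near_general (r α : ℝ) (hα0 : 0 ≤ α) (hα : α < r / Real.sqrt 2) :
    IsLeast {v : ℝ | ∃ β ∈ Set.Icc (0 : ℝ) r, v = |α - β| - Real.sqrt (r ^ 2 - β ^ 2)}
      (-Real.sqrt (r ^ 2 - α ^ 2)) ∧
    |α - α| - Real.sqrt (r ^ 2 - α ^ 2) = -Real.sqrt (r ^ 2 - α ^ 2) := by
  have h2α := two_mul_sq_lt_sq_of_lt_div_sqrt_two hα0 hα
  have hr : 0 < r := (div_pos_iff_of_pos_right (by positivity)).1 (hα0.trans_lt hα)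
  have hαr : α ≤ r := (pow_le_pow_iff_left₀ hα0 hr.le two_ne_zero).1 (by nlinarith)
  refine ⟨⟨⟨α, ⟨hα0, hαr⟩, by simp⟩, ?_⟩, by simp⟩
  rintro _ ⟨β, ⟨hβ0, -⟩, rfl⟩
  rcases le_total β α with hβα | hαβ
  · rw [abs_of_nonneg (sub_nonneg.2 hβα)]
    linarith [add_sqrt_sq_sub_sq_le hβ0 hβα h2α.le]
  · linarith [abs_nonneg (α - β), sqrt_le_sqrt (by nlinarith : r ^ 2 - β ^ 2 ≤ r ^ 2 - α ^ 2)]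

/-- For `r > 0` and `0 ≤ α < r/√2`, the minimum of `f_r(β) = |α − β| − √(r² − β²)` over
`[0, r]` exists, is attained at `β = α`, and equals `−√(r² − α²)`. -/
theorem min_fr_of_near (r α : ℝ) (hr : 0 < r) (hα0 : 0 ≤ α) (hα : α < r / Real.sqrt 2) :
    IsLeast {v : ℝ | ∃ β ∈ Set.Icc (0 : ℝ) r, v = |α - β| - Real.sqrt (r ^ 2 - β ^ 2)}
      (-Real.sqrt (r ^ 2 - α ^ 2)) ∧
    |α - α| - Real.sqrt (r ^ 2 - α ^ 2) = -Real.sqrt (r ^ 2 - α ^ 2) :=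
  min_fr_of_near_general r α hα0 hα
end
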